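/- arXiv:1910.03013 — 11 statements merged into one kernel-verified Lean document; each statement's English description precedes it below -/
import Mathlib

section
/- Let N be an even positive integer with N ≥ 4, let X : ℕ → ℝ, and define J(τ) = 2 ∑_{u=0}^{N/2−1} X(u)(1 + cos(2πτu/N)) for integer τ. Then for every integer u with 1 ≤ u ≤ N/2 − 1, X(u) = (1/N) ∑_{τ=1}^{N} J(τ) cos(2πτu/N). -/
open Real Complex Finset

/-!
Multiplying `J τ` by `cos (2πτu/N)` and using `2 (1 + cos a) cos b = 2 cos b + cos (a + b) + cos (a - b)`
turns `∑_τ J τ cos (2πτu/N)` into `∑_v X v (2 S(u) + S(v + u) + S(v - u))`, where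
`S(k) = ∑_{τ=1}^N cos (2πτk/N)` is the real part of a geometric sum of `N`-th roots of unity.
For `|k| < N` it equals `N` if `k = 0` and `0` otherwise, and since `1 ≤ u` and `v + u < N`,
only the term `v = u` survives.
-/

theorem Finset.sum_Icc_one_eq_sum_range {M : Type*} [AddCommMonoid M] (N : ℕ) (f : ℤ → M) :
    ∑ τ ∈ Icc (1 : ℤ) N, f τ = ∑ i ∈ range N, f (i + 1) := by
  refine sum_nbij' (fun τ ↦ (τ - 1).toNat) (fun i ↦ (i : ℤ) + 1) ?_ ?_ ?_ ?_ ?_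
  all_goals intro a ha
  all_goals simp only [mem_Icc, mem_range] at ha ⊢
  all_goals try omega
  congr 1
  omega

theorem sum_range_pow_succ_eq_zero {K : Type*} [DivisionRing K] {ω : K} {N : ℕ} (hω : ω ≠ 1)
    (hωN : ω ^ N = 1) : ∑ i ∈ range N, ω ^ (i + 1) = 0 := by
  simp [pow_succ', ← mul_sum, geom_sum_eq hω, hωN]

theorem sum_Icc_cos_two_pi_mul_div {N : ℕ} (hN : N ≠ 0) (k : ℤ) :
    ∑ τ ∈ Icc (1 : ℤ) N, Real.cos (2 * π * τ * k / N) = if (N : ℤ) ∣ k then (N : ℝ) else 0 := by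
  have hζ := Complex.isPrimitiveRoot_exp N hN
  set ω := Complex.exp (2 * π * I / N) ^ k
  have hcos : ∀ i : ℕ, Real.cos (2 * π * ((i : ℤ) + 1 : ℤ) * k / N) = (ω ^ (i + 1)).re := by
    intro i
    rw [← zpow_natCast, ← zpow_mul, ← Complex.exp_int_mul, ← exp_ofReal_mul_I_re]
    congr 2
    push_cast
    ring
  simp only [sum_Icc_one_eq_sum_range, hcos, ← re_sum]
  split_ifs with hk
  · simp [ω, (hζ.zpow_eq_one_iff_dvd k).mpr hk]
  · have hωN : ω ^ N = 1 := by
      rw [← zpow_natCast, ← zpow_mul, hζ.zpow_eq_one_iff_dvd]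
      exact dvd_mul_left _ _
    rw [sum_range_pow_succ_eq_zero (mt (hζ.zpow_eq_one_iff_dvd k).mp hk) hωN, zero_re]

theorem sum_Icc_cos_two_pi_mul_div_of_abs_lt {N : ℕ} {k : ℤ} (hk : |k| < N) :
    ∑ τ ∈ Icc (1 : ℤ) N, Real.cos (2 * π * τ * k / N) = if k = 0 then (N : ℝ) else 0 := by
  have hN : N ≠ 0 := by rintro rfl; exact (abs_nonneg k).not_gt hk
  rw [sum_Icc_cos_two_pi_mul_div hN]
  exact if_congr ⟨fun h ↦ Int.eq_zero_of_abs_lt_dvd h hk, fun h ↦ h ▸ dvd_zero _⟩ rfl rfl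

theorem two_mul_one_add_cos_mul_cos (x y : ℝ) :
    2 * (1 + Real.cos x) * Real.cos y = 2 * Real.cos y + Real.cos (x + y) + Real.cos (x - y) := by
  rw [Real.cos_add, Real.cos_sub]
  ring

theorem stmt1_general (N : ℕ)
    (X : ℕ → ℝ) (J : ℤ → ℝ)
    (hJ : ∀ τ : ℤ, J τ = 2 * ∑ u ∈ Finset.range (N / 2), X u * (1 + Real.cos (2 * Real.pi * (τ : ℝ) * (u : ℝ) / (N : ℝ))))
    (u : ℕ) (hu1 : 1 ≤ u) (hu2 : u ≤ N / 2 - 1) :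
    X u = (1 / (N : ℝ)) * ∑ τ ∈ Finset.Icc (1 : ℤ) (N : ℤ), J τ * Real.cos (2 * Real.pi * (τ : ℝ) * (u : ℝ) / (N : ℝ)) := by
  set S : ℤ → ℝ := fun k ↦ ∑ τ ∈ Icc (1 : ℤ) N, Real.cos (2 * π * τ * k / N)
  have hS : ∀ k : ℤ, |k| < N → S k = if k = 0 then (N : ℝ) else 0 :=
    fun k hk ↦ sum_Icc_cos_two_pi_mul_div_of_abs_lt hk
  have hexpand : ∑ τ ∈ Icc (1 : ℤ) N, J τ * Real.cos (2 * π * τ * u / N)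
      = ∑ v ∈ range (N / 2), X v * (2 * S u + S (v + u) + S (v - u)) := by
    simp only [S, hJ, mul_sum, sum_mul, ← sum_add_distrib]
    rw [sum_comm]
    refine sum_congr rfl fun v _ ↦ sum_congr rfl fun τ _ ↦ ?_
    have hadd : 2 * π * τ * ((v : ℝ) + u) / N = 2 * π * τ * v / N + 2 * π * τ * u / N := by ring
    have hsub : 2 * π * τ * ((v : ℝ) - u) / N = 2 * π * τ * v / N - 2 * π * τ * u / N := by ring
    push_cast
    rw [hadd, hsub]
    linear_combination X v * two_mul_one_add_cos_mul_cos (2 * π * τ * v / N) (2 * π * τ * u / N)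
  have hSu : S u = 0 := by
    rw [hS u (by rw [abs_lt]; omega), if_neg (by omega)]
  have hterm : ∀ v ∈ range (N / 2), X v * (2 * S u + S (v + u) + S (v - u)) =
      if v = u then X v * N else 0 := by
    intro v hv
    rw [mem_range] at hv
    rw [hSu, hS _ (by rw [abs_lt]; omega), hS _ (by rw [abs_lt]; omega), if_neg (by omega)]
    by_cases hvu : v = u <;> simp [hvu, sub_eq_zero]
  rw [hexpand, sum_congr rfl hterm, sum_ite_eq' _ _ (fun v ↦ X v * N),
    if_pos (mem_range.mpr (by omega))]
  have hN0 : (N : ℝ) ≠ 0 := Nat.cast_ne_zero.mpr (by omega)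
  field_simp

theorem stmt1 (N : ℕ) (hNeven : Even N) (hN : 4 ≤ N)
    (X : ℕ → ℝ) (J : ℤ → ℝ)
    (hJ : ∀ τ : ℤ, J τ = 2 * ∑ u ∈ Finset.range (N / 2), X u * (1 + Real.cos (2 * Real.pi * (τ : ℝ) * (u : ℝ) / (N : ℝ))))
    (u : ℕ) (hu1 : 1 ≤ u) (hu2 : u ≤ N / 2 - 1) :
    X u = (1 / (N : ℝ)) * ∑ τ ∈ Finset.Icc (1 : ℤ) (N : ℤ), J τ * Real.cos (2 * Real.pi * (τ : ℝ) * (u : ℝ) / (N : ℝ)) :=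
  stmt1_general N X J hJ u hu1 hu2
end

section
/- Let N be an even positive integer with N ≥ 4, let X : ℕ → ℝ, and define J(τ) = 2 ∑_{u=0}^{N/2−1} X(u)(1 + cos(2πτu/N)) for integer τ. Then X(0) = (1/(4N)) ∑_{τ=1}^{N} J(τ) − (1/2) ∑_{u₁=1}^{N/2−1} X(u₁). -/
/-!
Summing the observations over a full period τ = 1, …, N kills every cosine with a frequency
0 < u < N (a geometric sum of N-th roots of unity), while the u = 0 term contributes twice.
Hence ∑ J = 4N X(0) + 2N ∑_{u ≥ 1} X(u), which is the claimed formula solved for X(0).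
-/

open Real Complex Finset

lemma sum_Icc_one_natCast_eq_sum_range {M : Type*} [AddCommMonoid M] (N : ℕ) (f : ℤ → M) :
    ∑ τ ∈ Icc (1 : ℤ) N, f τ = ∑ n ∈ range N, f (n + 1) := by
  rw [Int.Icc_eq_finset_map, sum_map]
  simp [add_comm]

lemma geom_sum_eq_zero_of_pow_eq_one {K : Type*} [Field K] {z : K} {n : ℕ} (hz : z ≠ 1)
    (hzn : z ^ n = 1) : ∑ i ∈ range n, z ^ i = 0 := by
  rw [geom_sum_eq hz, hzn, sub_self, zero_div]

lemma cos_two_pi_mul_div_eq_re_pow (N k : ℕ) :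
    Real.cos (2 * π * k / N) = (Complex.exp (2 * π * I / N) ^ k).re := by
  rw [← Complex.exp_nat_mul, ← Complex.exp_ofReal_mul_I_re]
  push_cast
  ring_nf

lemma sum_cos_two_pi_mul_div_of_not_dvd {N u : ℕ} (hu : ¬ N ∣ u) :
    ∑ τ ∈ Icc (1 : ℤ) N, Real.cos (2 * π * τ * u / N) = 0 := by
  rcases Nat.eq_zero_or_pos N with rfl | hN
  · simp
  have hζ := Complex.isPrimitiveRoot_exp N hN.ne'
  set z := Complex.exp (2 * π * I / N) ^ u
  have hz : z ≠ 1 := fun h => hu ((hζ.pow_eq_one_iff_dvd u).mp h)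
  have hzN : z ^ N = 1 := by rw [pow_right_comm, hζ.pow_eq_one, one_pow]
  calc ∑ τ ∈ Icc (1 : ℤ) N, Real.cos (2 * π * τ * u / N)
      = (∑ n ∈ range N, z ^ (n + 1)).re := by
        rw [sum_Icc_one_natCast_eq_sum_range, re_sum]
        refine sum_congr rfl fun n _ => ?_
        rw [← pow_mul, mul_comm, ← cos_two_pi_mul_div_eq_re_pow]
        push_cast; ring_nf
    _ = (z * ∑ n ∈ range N, z ^ n).re := by simp only [mul_sum, pow_succ']
    _ = 0 := by rw [geom_sum_eq_zero_of_pow_eq_one hz hzN, mul_zero, zero_re]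

lemma sum_cos_two_pi_mul_div (N u : ℕ) :
    ∑ τ ∈ Icc (1 : ℤ) N, Real.cos (2 * π * τ * u / N) = if N ∣ u then (N : ℝ) else 0 := by
  split_ifs with hu
  · obtain ⟨k, rfl⟩ := hu
    rcases Nat.eq_zero_or_pos N with rfl | hN
    · simp
    push_cast
    have hcos : ∀ τ : ℤ, Real.cos (2 * π * τ * (N * k) / N) = 1 := fun τ => by
      rw [← Real.cos_int_mul_two_pi (τ * k)]
      push_cast
      field_simp
    simp [hcos]
  · exact sum_cos_two_pi_mul_div_of_not_dvd hu

theorem stmt2_general (N : ℕ) (hN : 4 ≤ N)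
    (X : ℕ → ℝ) (J : ℤ → ℝ)
    (hJ : ∀ τ : ℤ, J τ = 2 * ∑ u ∈ Finset.range (N / 2), X u * (1 + Real.cos (2 * Real.pi * (τ : ℝ) * (u : ℝ) / (N : ℝ)))) :
    X 0 = (1 / (4 * (N : ℝ))) * ∑ τ ∈ Finset.Icc (1 : ℤ) (N : ℤ), J τ
        - (1 / 2) * ∑ u₁ ∈ Finset.Icc 1 (N / 2 - 1), X u₁ := by
  obtain ⟨m, hm⟩ : ∃ m, N / 2 = m + 1 := Nat.exists_eq_add_one.mpr (by omega)
  have hsum : ∑ τ ∈ Icc (1 : ℤ) N, J τ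
      = 2 * ∑ u ∈ range (N / 2), X u * (N + if N ∣ u then (N : ℝ) else 0) := by
    simp only [hJ, ← mul_sum, sum_comm (s := Icc (1 : ℤ) N), sum_add_distrib, sum_const,
      Int.card_Icc, add_sub_cancel_right, Int.toNat_natCast, nsmul_eq_mul, mul_one,
      sum_cos_two_pi_mul_div]
  have hlow : ∀ u ∈ Ico 1 (m + 1), ¬ N ∣ u := fun u hu => by
    obtain ⟨hu1, hum⟩ := mem_Ico.mp hu
    exact Nat.not_dvd_of_pos_of_lt hu1 (by omega)
  have hN0 : (N : ℝ) ≠ 0 := by exact_mod_cast (by omega : N ≠ 0)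
  rw [hsum, hm, sum_range_eq_add_Ico _ (Nat.zero_lt_succ m),
    sum_congr rfl fun u hu => by rw [if_neg (hlow u hu)],
    Nat.succ_eq_add_one, Ico_add_one_right_eq_Icc, add_tsub_cancel_right]
  simp only [dvd_zero, if_true, add_zero, ← sum_mul]
  field_simp
  ring

theorem stmt2 (N : ℕ) (hNeven : Even N) (hN : 4 ≤ N)
    (X : ℕ → ℝ) (J : ℤ → ℝ)
    (hJ : ∀ τ : ℤ, J τ = 2 * ∑ u ∈ Finset.range (N / 2), X u * (1 + Real.cos (2 * Real.pi * (τ : ℝ) * (u : ℝ) / (N : ℝ)))) :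
    X 0 = (1 / (4 * (N : ℝ))) * ∑ τ ∈ Finset.Icc (1 : ℤ) (N : ℤ), J τ
        - (1 / 2) * ∑ u₁ ∈ Finset.Icc 1 (N / 2 - 1), X u₁ :=
  stmt2_general N hN X J hJ
end

section
/- Let N be an even positive integer with N ≥ 4, let X : ℕ → ℝ, and define J(τ) = 2 ∑_{u=0}^{N/2−1} X(u)(1 + cos(2πτu/N)) for integer τ. Then for every integer u with 1 ≤ u ≤ N/2 − 1, X(u) = (1/N) ∑_{τ=0}^{N−1} J(τ) cos(2πτu/N). -/
/-! Expanding `J τ * cos (2πτu/N)` by the product-to-sum formula leaves cosines of the frequencies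
`u`, `v + u` and `v - u`. Summed over a full period `τ < N`, a cosine of frequency `k` gives `N` if
`N ∣ k` and `0` otherwise (a geometric sum of `N`-th roots of unity); since `0 < u` and `u, v < N/2`,
only the term `v = u` survives. -/

open Real Finset

lemma sum_range_cos_two_pi_mul_int_div {N : ℕ} (hN : N ≠ 0) (k : ℤ) :
    ∑ τ ∈ range N, cos (2 * π * τ * k / N) = if (N : ℤ) ∣ k then (N : ℝ) else 0 := by
  have hζ := Complex.isPrimitiveRoot_exp N hN
  set ζ := Complex.exp (2 * π * Complex.I / N) ^ k
  have hcos (τ : ℕ) : cos (2 * π * τ * k / N) = (ζ ^ τ).re := by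
    rw [← zpow_natCast, ← zpow_mul, ← Complex.exp_int_mul, ← Complex.exp_ofReal_mul_I_re]
    push_cast
    ring_nf
  simp_rw [hcos, ← Complex.re_sum]
  split_ifs with hdvd
  · simp [ζ, (hζ.zpow_eq_one_iff_dvd k).mpr hdvd]
  · have hζN : ζ ^ N = 1 := by
      rw [← zpow_natCast, ← zpow_mul, mul_comm k, zpow_mul, zpow_natCast, hζ.pow_eq_one, one_zpow]
    rw [geom_sum_eq (mt (hζ.zpow_eq_one_iff_dvd k).mp hdvd), hζN]
    simp

lemma sum_range_cos_two_pi_mul_div {N u : ℕ} (hu : 0 < u) (huN : u < N) :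
    ∑ τ ∈ range N, cos (2 * π * τ * u / N) = 0 := by
  have hndvd : ¬ (N : ℤ) ∣ u := fun h => by
    have := Int.le_of_dvd (by omega) h
    omega
  exact_mod_cast (sum_range_cos_two_pi_mul_int_div (by omega) u).trans (if_neg hndvd)

lemma sum_range_two_mul_cos_mul_cos {N u v : ℕ} (hu : 0 < u) (huv : u + v < N) :
    ∑ τ ∈ range N, 2 * cos (2 * π * τ * v / N) * cos (2 * π * τ * u / N) =
      if v = u then (N : ℝ) else 0 := by
  have hN : N ≠ 0 := by omega
  have hangle (τ : ℕ) : 2 * cos (2 * π * τ * v / N) * cos (2 * π * τ * u / N) =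
      cos (2 * π * τ * ((v - u : ℤ) : ℝ) / N) + cos (2 * π * τ * ((v + u : ℤ) : ℝ) / N) := by
    rw [two_mul_cos_mul_cos]
    push_cast
    ring_nf
  simp_rw [hangle, sum_add_distrib, sum_range_cos_two_pi_mul_int_div hN]
  have hsum : ¬ (N : ℤ) ∣ v + u := fun h => by
    have := Int.le_of_dvd (by omega) h
    omega
  have hdiff : (N : ℤ) ∣ v - u ↔ v = u := by
    refine ⟨fun h => ?_, fun h => by simp [h]⟩
    have := Int.eq_zero_of_abs_lt_dvd h (by rw [abs_lt]; omega)
    omega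
  simp only [hdiff, hsum, if_false, add_zero]

lemma sum_Icc_int_zero_sub_one {M : Type*} [AddCommMonoid M] (N : ℕ) (f : ℤ → M) :
    ∑ τ ∈ Icc (0 : ℤ) (N - 1), f τ = ∑ τ ∈ range N, f τ := by
  rw [Int.Icc_eq_finset_map, sum_map]
  simp

theorem stmt4_general (N : ℕ)
    (X : ℕ → ℝ) (J : ℤ → ℝ)
    (hJ : ∀ τ : ℤ, J τ = 2 * ∑ u ∈ Finset.range (N / 2), X u * (1 + Real.cos (2 * Real.pi * (τ : ℝ) * (u : ℝ) / (N : ℝ))))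
    (u : ℕ) (hu1 : 1 ≤ u) (hu2 : u ≤ N / 2 - 1) :
    X u = (1 / (N : ℝ)) * ∑ τ ∈ Finset.Icc (0 : ℤ) ((N : ℤ) - 1), J τ * Real.cos (2 * Real.pi * (τ : ℝ) * (u : ℝ) / (N : ℝ)) := by
  have hN : (N : ℝ) ≠ 0 := by norm_cast; omega
  have hu : 0 < u := by omega
  have hexpand (τ : ℕ) : J τ * cos (2 * π * τ * u / N) = ∑ v ∈ range (N / 2),
      X v * (2 * cos (2 * π * τ * u / N) +
        2 * cos (2 * π * τ * v / N) * cos (2 * π * τ * u / N)) := by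
    rw [hJ, Int.cast_natCast, mul_sum, sum_mul]
    congr! 1 with v
    ring
  have horth : ∀ v ∈ range (N / 2), ∑ τ ∈ range N, X v * (2 * cos (2 * π * τ * u / N) +
      2 * cos (2 * π * τ * v / N) * cos (2 * π * τ * u / N)) = if v = u then X v * N else 0 := by
    intro v hv
    rw [mem_range] at hv
    rw [← mul_sum, sum_add_distrib, ← mul_sum, sum_range_cos_two_pi_mul_div hu (by omega),
      sum_range_two_mul_cos_mul_cos hu (by omega)]
    split_ifs <;> ring
  rw [sum_Icc_int_zero_sub_one]
  simp_rw [Int.cast_natCast, hexpand]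
  rw [sum_comm, sum_congr rfl horth, sum_ite_eq', if_pos (mem_range.mpr (by omega))]
  field_simp

theorem stmt4 (N : ℕ) (hNeven : Even N) (hN : 4 ≤ N)
    (X : ℕ → ℝ) (J : ℤ → ℝ)
    (hJ : ∀ τ : ℤ, J τ = 2 * ∑ u ∈ Finset.range (N / 2), X u * (1 + Real.cos (2 * Real.pi * (τ : ℝ) * (u : ℝ) / (N : ℝ))))
    (u : ℕ) (hu1 : 1 ≤ u) (hu2 : u ≤ N / 2 - 1) :
    X u = (1 / (N : ℝ)) * ∑ τ ∈ Finset.Icc (0 : ℤ) ((N : ℤ) - 1), J τ * Real.cos (2 * Real.pi * (τ : ℝ) * (u : ℝ) / (N : ℝ)) :=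
  stmt4_general N X J hJ u hu1 hu2
end

section
/- Let N be an even positive integer with N ≥ 4, let X : ℕ → ℝ, and define J(τ) = 2 ∑_{u=0}^{N/2−1} X(u)(1 + cos(2πτu/N)) for integer τ. Then X(0) = (1/(4N)) ∑_{τ=0}^{N−1} J(τ) − (1/2) ∑_{u₁=1}^{N/2−1} X(u₁). -/
/-!
Summing `J` over a full period, every cosine sum `∑_τ cos (2πτu/N)` with `0 < u < N` vanishes,
being the real part of a geometric sum of a nontrivial `N`-th root of unity. Hence
`∑_τ J τ = 4N X(0) + 2N ∑_{u ≥ 1} X(u)`.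
-/

open Real Complex Finset

theorem Int.sum_Icc_zero_natCast_sub_one_eq_sum_range {M : Type*} [AddCommMonoid M] (N : ℕ)
    (f : ℤ → M) : ∑ τ ∈ Icc (0 : ℤ) (N - 1), f τ = ∑ τ ∈ Finset.range N, f τ := by
  rw [Int.Icc_eq_finset_map, sum_map]
  simp

theorem Real.sum_range_cos_two_pi_mul_div_eq_zero {N u : ℕ} (hu : ¬ N ∣ u) :
    ∑ τ ∈ range N, Real.cos (2 * π * τ * u / N) = 0 := by
  rcases eq_or_ne N 0 with rfl | hN
  · simp
  have hζ := (Complex.isPrimitiveRoot_exp N hN).pow_eq_one_iff_dvd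
  set z := Complex.exp (2 * π * I / N) ^ u
  have hterm (τ : ℕ) : Real.cos (2 * π * τ * u / N) = (z ^ τ).re := by
    rw [← pow_mul, ← Complex.exp_nat_mul, ← Complex.exp_ofReal_mul_I_re]
    congr 2
    push_cast
    ring
  have hz1 : z ≠ 1 := fun h => hu ((hζ u).mp h)
  have hzN : z ^ N = 1 := by
    rw [← pow_mul, hζ]
    exact dvd_mul_left N u
  simp_rw [hterm, ← Complex.re_sum, geom_sum_eq hz1, hzN, sub_self, zero_div, zero_re]

theorem stmt5_general (N : ℕ) (hN : 4 ≤ N)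
    (X : ℕ → ℝ) (J : ℤ → ℝ)
    (hJ : ∀ τ : ℤ, J τ = 2 * ∑ u ∈ Finset.range (N / 2), X u * (1 + Real.cos (2 * Real.pi * (τ : ℝ) * (u : ℝ) / (N : ℝ)))) :
    X 0 = (1 / (4 * (N : ℝ))) * ∑ τ ∈ Finset.Icc (0 : ℤ) ((N : ℤ) - 1), J τ
        - (1 / 2) * ∑ u₁ ∈ Finset.Icc 1 (N / 2 - 1), X u₁ := by
  set M := N / 2
  have hM : 0 < M := by omega
  have hsum : ∑ τ ∈ Icc (0 : ℤ) (N - 1), J τ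
      = 2 * ∑ u ∈ range M, X u * (N + ∑ τ ∈ range N, Real.cos (2 * π * τ * u / N)) := by
    simp_rw [Int.sum_Icc_zero_natCast_sub_one_eq_sum_range, hJ, ← mul_sum, Int.cast_natCast]
    rw [sum_comm]
    simp_rw [← mul_sum, sum_add_distrib, sum_const, card_range, nsmul_one]
  have hzero : ∑ τ ∈ range N, Real.cos (2 * π * τ * (0 : ℕ) / N) = N := by simp
  have hhigh : ∑ u ∈ Ico 1 M, X u * (N + ∑ τ ∈ range N, Real.cos (2 * π * τ * u / N))
      = N * ∑ u ∈ Ico 1 M, X u := by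
    rw [mul_sum]
    refine sum_congr rfl fun u hu => ?_
    rw [mem_Ico] at hu
    rw [sum_range_cos_two_pi_mul_div_eq_zero (Nat.not_dvd_of_pos_of_lt (by omega) (by omega)),
      add_zero, mul_comm]
  rw [hsum, sum_range_eq_add_Ico _ hM, hzero, hhigh,
    Icc_sub_one_right_eq_Ico_of_not_isMin (by simpa using hM.ne')]
  have hN0 : (N : ℝ) ≠ 0 := by positivity
  field_simp
  ring

theorem stmt5 (N : ℕ) (hNeven : Even N) (hN : 4 ≤ N)
    (X : ℕ → ℝ) (J : ℤ → ℝ)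
    (hJ : ∀ τ : ℤ, J τ = 2 * ∑ u ∈ Finset.range (N / 2), X u * (1 + Real.cos (2 * Real.pi * (τ : ℝ) * (u : ℝ) / (N : ℝ)))) :
    X 0 = (1 / (4 * (N : ℝ))) * ∑ τ ∈ Finset.Icc (0 : ℤ) ((N : ℤ) - 1), J τ
        - (1 / 2) * ∑ u₁ ∈ Finset.Icc 1 (N / 2 - 1), X u₁ :=
  stmt5_general N hN X J hJ
end

section
/- Let N be an even positive integer with N ≥ 4, let X : ℕ → ℝ satisfy X(u) ≥ 0 for all u, and define J(τ) = 2 ∑_{u=0}^{N/2−1} X(u)(1 + cos(2πτu/N)) for integer τ. Then for every integer u with 1 ≤ u ≤ N/2 − 1, X(u) = | (1/N) ∑_{τ=1}^{N} J(τ) exp(i·2πτu/N) |, where |·| denotes the complex modulus. -/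
open Real Complex Finset

/-!
With `ζ = exp (2πi/N)` one has `2 (1 + cos (2πτv/N)) = 2 + ζ^(τv) + ζ^(-τv)`, so the `u`-th
discrete Fourier coefficient of `J` is `∑_v X v (2 S(u) + S(u + v) + S(u - v))`, where
`S(k) = ∑_{τ=1}^N ζ^(τk)` equals `N` if `N ∣ k` and `0` otherwise. For `1 ≤ u < N/2` and
`v < N/2` only `S(u - v)` with `v = u` survives, leaving `N X(u)`; as `X(u) ≥ 0` it is its
own modulus.
-/

theorem sum_Icc_zpow_eq_zero_of_pow_eq_one {K : Type*} [Field K] {z : K} {N : ℕ}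
    (hz : z ^ N = 1) (hz1 : z ≠ 1) : ∑ τ ∈ Icc (1 : ℤ) N, z ^ τ = 0 := by
  rw [Int.Icc_eq_finset_map, sum_map, add_sub_cancel_right, Int.toNat_natCast]
  simp only [Function.Embedding.trans_apply, Nat.castEmbedding_apply, addLeftEmbedding_apply,
    ← Nat.cast_one (R := ℤ), ← Nat.cast_add, zpow_natCast, add_comm 1, pow_succ, ← sum_mul,
    geom_sum_eq hz1, hz, sub_self, zero_div, zero_mul]

namespace IsPrimitiveRoot

variable {K : Type*} [Field K] {ζ : K} {N : ℕ}

theorem sum_Icc_zpow_mul (hζ : IsPrimitiveRoot ζ N) (k : ℤ) :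
    ∑ τ ∈ Icc (1 : ℤ) N, ζ ^ (τ * k) = if (N : ℤ) ∣ k then (N : K) else 0 := by
  simp_rw [mul_comm _ k, zpow_mul]
  split_ifs with hk
  · simp [(hζ.zpow_eq_one_iff_dvd k).2 hk]
  · refine sum_Icc_zpow_eq_zero_of_pow_eq_one ?_ (mt (hζ.zpow_eq_one_iff_dvd k).1 hk)
    rw [← zpow_natCast, ← zpow_mul, mul_comm, zpow_mul, hζ.zpow_eq_one, one_zpow]

/-- `u + M ≤ N` rules out aliasing: no frequency `u ± v` with `v < M` other than `u - u`
is a multiple of `N`. -/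
theorem sum_Icc_raisedCosine_mul_zpow (hζ : IsPrimitiveRoot ζ N) (X : ℕ → K) {M u : ℕ}
    (hu : 0 < u) (huM : u < M) (hMN : u + M ≤ N) :
    ∑ τ ∈ Icc (1 : ℤ) N, (∑ v ∈ range M, X v * (2 + ζ ^ (τ * v) + ζ ^ (-(τ * v)))) * ζ ^ (τ * u)
      = N * X u := by
  have hζ0 : ζ ≠ 0 := hζ.ne_zero (by omega)
  have hdvd_iff : ∀ k : ℤ, |k| < N → ((N : ℤ) ∣ k ↔ k = 0) := fun k hk =>
    ⟨fun h ↦ Int.eq_zero_of_abs_lt_dvd h hk, by rintro rfl; exact dvd_zero _⟩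
  have hexpand : ∀ τ : ℤ, ∀ v : ℕ, X v * (2 + ζ ^ (τ * v) + ζ ^ (-(τ * v))) * ζ ^ (τ * u)
      = X v * (2 * ζ ^ (τ * u) + ζ ^ (τ * (u + v)) + ζ ^ (τ * (u - v))) := by
    intro τ v
    rw [mul_add τ, mul_sub τ, zpow_add₀ hζ0, zpow_sub₀ hζ0, zpow_neg]
    field_simp
  have hcoeff : ∀ v ∈ range M, X v * (2 * ∑ τ ∈ Icc (1 : ℤ) N, ζ ^ (τ * u)
      + ∑ τ ∈ Icc (1 : ℤ) N, ζ ^ (τ * (u + v)) + ∑ τ ∈ Icc (1 : ℤ) N, ζ ^ (τ * (u - v)))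
      = if v = u then N * X u else 0 := by
    intro v hv
    have hvM := mem_range.1 hv
    have hu_ndvd : ¬ (N : ℤ) ∣ u := by rw [hdvd_iff _ (abs_lt.2 ⟨by omega, by omega⟩)]; omega
    have huv_ndvd : ¬ (N : ℤ) ∣ (u + v) := by
      rw [hdvd_iff _ (abs_lt.2 ⟨by omega, by omega⟩)]; omega
    have hsub_dvd : (N : ℤ) ∣ (u - v) ↔ v = u := by
      rw [hdvd_iff _ (abs_lt.2 ⟨by omega, by omega⟩)]; omega
    simp only [hζ.sum_Icc_zpow_mul, if_neg hu_ndvd, if_neg huv_ndvd, hsub_dvd]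
    split_ifs with hvu
    · rw [hvu]; ring
    · ring
  calc _ = ∑ v ∈ range M, X v * (2 * ∑ τ ∈ Icc (1 : ℤ) N, ζ ^ (τ * u)
      + ∑ τ ∈ Icc (1 : ℤ) N, ζ ^ (τ * (u + v)) + ∑ τ ∈ Icc (1 : ℤ) N, ζ ^ (τ * (u - v))) := by
        simp only [sum_mul, hexpand, mul_sum, ← sum_add_distrib]
        exact sum_comm
    _ = N * X u := by rw [sum_congr rfl hcoeff, sum_ite_eq', if_pos (mem_range.2 huM)]

end IsPrimitiveRoot

theorem Complex.exp_I_mul_two_pi_mul_div (N : ℕ) (τ k : ℤ) :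
    exp (I * ↑(2 * π * τ * k / N)) = exp (2 * π * I / N) ^ (τ * k) := by
  rw [← exp_int_mul]
  push_cast
  ring_nf

theorem Complex.two_mul_one_add_cos_two_pi_mul_div (N : ℕ) (τ k : ℤ) :
    2 * (1 + ↑(Real.cos (2 * π * τ * k / N))) = 2 + exp (2 * π * I / N) ^ (τ * k)
      + exp (2 * π * I / N) ^ (-(τ * k)) := by
  rw [← exp_I_mul_two_pi_mul_div, zpow_neg, ← exp_I_mul_two_pi_mul_div, ← exp_neg, mul_add,
    ofReal_cos, two_cos]
  ring_nf

theorem stmt6_general (N : ℕ)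
    (X : ℕ → ℝ) (hX : ∀ u, 0 ≤ X u) (J : ℤ → ℝ)
    (hJ : ∀ τ : ℤ, J τ = 2 * ∑ u ∈ Finset.range (N / 2), X u * (1 + Real.cos (2 * Real.pi * (τ : ℝ) * (u : ℝ) / (N : ℝ))))
    (u : ℕ) (hu1 : 1 ≤ u) (hu2 : u ≤ N / 2 - 1) :
    X u = ‖(1 / (N : ℂ)) * ∑ τ ∈ Finset.Icc (1 : ℤ) (N : ℤ),
      (J τ : ℂ) * Complex.exp (Complex.I * ((2 * Real.pi * (τ : ℝ) * (u : ℝ) / (N : ℝ) : ℝ) : ℂ))‖ := by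
  set ζ := exp (2 * π * I / N)
  have hJζ : ∀ τ : ℤ,
      (J τ : ℂ) = ∑ v ∈ range (N / 2), (X v : ℂ) * (2 + ζ ^ (τ * v) + ζ ^ (-(τ * v))) := by
    intro τ
    rw [hJ τ, ofReal_mul, ofReal_sum, mul_sum]
    refine sum_congr rfl fun v _ => ?_
    have hcos := two_mul_one_add_cos_two_pi_mul_div N τ v
    rw [Int.cast_natCast] at hcos
    rw [← hcos]
    push_cast
    ring
  have hexp : ∀ τ : ℤ, exp (I * ↑(2 * π * τ * u / N)) = ζ ^ (τ * u) := fun τ ↦ by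
    simpa using exp_I_mul_two_pi_mul_div N τ u
  simp only [hJζ, hexp]
  rw [(isPrimitiveRoot_exp N (by omega)).sum_Icc_raisedCosine_mul_zpow _ (by omega) (by omega)
    (by omega), one_div, inv_mul_cancel_left₀ (by norm_cast; omega), norm_real,
    norm_of_nonneg (hX u)]

theorem stmt6 (N : ℕ) (hNeven : Even N) (hN : 4 ≤ N)
    (X : ℕ → ℝ) (hX : ∀ u, 0 ≤ X u) (J : ℤ → ℝ)
    (hJ : ∀ τ : ℤ, J τ = 2 * ∑ u ∈ Finset.range (N / 2), X u * (1 + Real.cos (2 * Real.pi * (τ : ℝ) * (u : ℝ) / (N : ℝ))))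
    (u : ℕ) (hu1 : 1 ≤ u) (hu2 : u ≤ N / 2 - 1) :
    X u = ‖(1 / (N : ℂ)) * ∑ τ ∈ Finset.Icc (1 : ℤ) (N : ℤ),
      (J τ : ℂ) * Complex.exp (Complex.I * ((2 * Real.pi * (τ : ℝ) * (u : ℝ) / (N : ℝ) : ℝ) : ℂ))‖ :=
  stmt6_general N X hX J hJ u hu1 hu2
end

section
/- Let N be an even positive integer with N ≥ 4, let X : ℕ → ℝ satisfy X(u) ≥ 0 for all u, and define J(τ) = 2 ∑_{u=0}^{N/2−1} X(u)(1 + cos(2πτu/N)) for integer τ. Then for every integer u with 1 ≤ u ≤ N/2 − 1, X(u) = | (1/N) ∑_{τ=0}^{N−1} J(τ) exp(i·2πτu/N) |, where |·| denotes the complex modulus. -/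
/-!
Since `2 (1 + cos θ) e^{iφ} = 2 e^{iφ} + e^{i(φ + θ)} + e^{i(φ - θ)}`, the `u`-th DFT coefficient
of `J` is a combination of geometric sums of `N`-th roots of unity with exponents `u`, `u + v` and
`u - v`, where `v < N / 2` runs over the support of `X`. For `1 ≤ u < N / 2` only `N ∣ u - v`, i.e.
`v = u`, can happen, so the coefficient is `X u`, which is its own modulus as `X u ≥ 0`.
-/

open Real Complex Finset

theorem IsPrimitiveRoot.sum_range_zpow_mul_eq_ite {K : Type*} [Field K] {ζ : K} {n : ℕ}
    (hζ : IsPrimitiveRoot ζ n) (k : ℤ) :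
    ∑ t ∈ range n, ζ ^ (k * t) = if (n : ℤ) ∣ k then (n : K) else 0 := by
  simp only [zpow_mul, zpow_natCast]
  split_ifs with hk
  · simp [(hζ.zpow_eq_one_iff_dvd k).mpr hk]
  · have hpow : (ζ ^ k) ^ n = 1 := by
      rw [← zpow_natCast, ← zpow_mul, mul_comm, zpow_mul, zpow_natCast, hζ.pow_eq_one, one_zpow]
    rw [geom_sum_eq (mt (hζ.zpow_eq_one_iff_dvd k).mp hk), hpow, sub_self, zero_div]

theorem cexp_I_mul_two_pi_mul_div_eq_zpow (N : ℕ) (k : ℤ) :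
    Complex.exp (I * ((2 * π * k / N : ℝ) : ℂ)) = Complex.exp (2 * π * I / N) ^ k := by
  rw [← Complex.exp_int_mul]
  push_cast
  ring_nf

theorem two_mul_one_add_cos_mul_cexp (θ φ : ℝ) :
    ((2 * (1 + Real.cos θ) : ℝ) : ℂ) * Complex.exp (I * φ) =
      2 * Complex.exp (I * φ) + Complex.exp (I * (φ + θ : ℝ)) + Complex.exp (I * (φ - θ : ℝ)) := by
  push_cast
  rw [Complex.cos, show I * (φ + θ) = I * φ + θ * I by ring,
    show I * (φ - θ) = I * φ + -θ * I by ring, Complex.exp_add, Complex.exp_add]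
  ring

theorem sum_range_two_mul_one_add_cos_mul_cexp_eq_ite {N u v : ℕ} (hu : 0 < u) (huv : u + v < N) :
    ∑ t ∈ range N, ((2 * (1 + Real.cos (2 * π * t * v / N)) : ℝ) : ℂ) *
        Complex.exp (I * ((2 * π * t * u / N : ℝ) : ℂ)) = if v = u then (N : ℂ) else 0 := by
  set ζ := Complex.exp (2 * π * I / N)
  have hζ : IsPrimitiveRoot ζ N := Complex.isPrimitiveRoot_exp N (by omega)
  have hexp : ∀ (t : ℕ) (k : ℤ) (x : ℝ), x = 2 * π * (k * t : ℤ) / N →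
      Complex.exp (I * x) = ζ ^ (k * t) := by
    rintro t k x rfl
    exact cexp_I_mul_two_pi_mul_div_eq_zpow N _
  have hdvd : ∀ k : ℤ, -N < k → k < N → ((N : ℤ) ∣ k ↔ k = 0) := fun k h₁ h₂ =>
    ⟨fun h => Int.eq_zero_of_abs_lt_dvd h (abs_lt.mpr ⟨h₁, h₂⟩), fun h => h ▸ dvd_zero _⟩
  calc _ = ∑ t ∈ range N, (2 * ζ ^ ((u : ℤ) * t) + ζ ^ (((u : ℤ) + v) * t)
          + ζ ^ (((u : ℤ) - v) * t)) := by
        refine sum_congr rfl fun t _ => ?_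
        rw [two_mul_one_add_cos_mul_cexp, hexp t u _ (by push_cast; ring),
          hexp t (u + v) _ (by push_cast; ring), hexp t (u - v) _ (by push_cast; ring)]
    _ = if v = u then (N : ℂ) else 0 := by
        rw [sum_add_distrib, sum_add_distrib, ← mul_sum, hζ.sum_range_zpow_mul_eq_ite,
          hζ.sum_range_zpow_mul_eq_ite, hζ.sum_range_zpow_mul_eq_ite,
          if_neg (by rw [hdvd] <;> omega), if_neg (by rw [hdvd] <;> omega)]
        simp only [hdvd _ (by omega : -(N : ℤ) < u - v) (by omega), sub_eq_zero, Nat.cast_inj,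
          eq_comm (a := u)]
        simp

theorem sum_Icc_zero_sub_one_eq_sum_range {M : Type*} [AddCommMonoid M] (f : ℤ → M) (n : ℕ) :
    ∑ τ ∈ Icc 0 ((n : ℤ) - 1), f τ = ∑ t ∈ range n, f t := by
  rw [Int.Icc_eq_finset_map, sum_map]
  simp

theorem stmt7_general (N : ℕ)
    (X : ℕ → ℝ) (hX : ∀ u, 0 ≤ X u) (J : ℤ → ℝ)
    (hJ : ∀ τ : ℤ, J τ = 2 * ∑ u ∈ Finset.range (N / 2), X u * (1 + Real.cos (2 * Real.pi * (τ : ℝ) * (u : ℝ) / (N : ℝ))))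
    (u : ℕ) (hu1 : 1 ≤ u) (hu2 : u ≤ N / 2 - 1) :
    X u = ‖((1 / (N : ℂ)) * ∑ τ ∈ Finset.Icc (0 : ℤ) ((N : ℤ) - 1),
      (J τ : ℂ) * Complex.exp (Complex.I * ((2 * Real.pi * (τ : ℝ) * (u : ℝ) / (N : ℝ) : ℝ) : ℂ)))‖ := by
  have hN : (N : ℂ) ≠ 0 := Nat.cast_ne_zero.mpr (by omega)
  have hcoeff : ∑ t ∈ range N, (J t : ℂ) * Complex.exp (I * ((2 * π * (t : ℤ) * u / N : ℝ) : ℂ)) =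
      N * X u := calc
    _ = ∑ t ∈ range N, ∑ v ∈ range (N / 2), (X v : ℂ) *
          (((2 * (1 + Real.cos (2 * π * t * v / N)) : ℝ) : ℂ) *
            Complex.exp (I * ((2 * π * t * u / N : ℝ) : ℂ))) := by
      refine sum_congr rfl fun t _ => ?_
      rw [hJ, Int.cast_natCast, mul_sum, ofReal_sum, sum_mul]
      refine sum_congr rfl fun v _ => ?_
      push_cast
      ring
    _ = ∑ v ∈ range (N / 2), (X v : ℂ) * if v = u then (N : ℂ) else 0 := by
      rw [sum_comm]
      refine sum_congr rfl fun v hv => ?_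
      rw [← mul_sum, sum_range_two_mul_one_add_cos_mul_cexp_eq_ite (by omega) (by have := mem_range.mp hv; omega)]
    _ = N * X u := by
      simp only [mul_ite, mul_zero, sum_ite_eq', mem_range]
      rw [if_pos (by omega), mul_comm]
  rw [sum_Icc_zero_sub_one_eq_sum_range, hcoeff, one_div, inv_mul_cancel_left₀ hN, norm_real,
    norm_of_nonneg (hX u)]

theorem stmt7 (N : ℕ) (hNeven : Even N) (hN : 4 ≤ N)
    (X : ℕ → ℝ) (hX : ∀ u, 0 ≤ X u) (J : ℤ → ℝ)
    (hJ : ∀ τ : ℤ, J τ = 2 * ∑ u ∈ Finset.range (N / 2), X u * (1 + Real.cos (2 * Real.pi * (τ : ℝ) * (u : ℝ) / (N : ℝ))))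
    (u : ℕ) (hu1 : 1 ≤ u) (hu2 : u ≤ N / 2 - 1) :
    X u = ‖((1 / (N : ℂ)) * ∑ τ ∈ Finset.Icc (0 : ℤ) ((N : ℤ) - 1),
      (J τ : ℂ) * Complex.exp (Complex.I * ((2 * Real.pi * (τ : ℝ) * (u : ℝ) / (N : ℝ) : ℝ) : ℂ)))‖ :=
  stmt7_general N X hX J hJ u hu1 hu2
end

section
/- Let N be an even positive integer with N ≥ 4, let X : ℕ → ℝ, and define J(τ) = 2 ∑_{u=0}^{N/2−1} X(u)(1 + cos(2πτu/N)) for integer τ (including negative τ). Then for every integer u with 1 ≤ u ≤ N/2 − 1, X(u) = Re( (1/N) ∑_{τ=−N/2}^{N/2−1} J(τ) exp(i·2πτu/N) ). -/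
/-!
Writing `ω = exp (2πi/N)`, the identity `2 (1 + cos θ) = 2 + e^{iθ} + e^{-iθ}` turns `J` into the
trigonometric polynomial `J(τ) = ∑ᵥ X(v) (2 + ω^{τv} + ω^{-τv})`. In the sum of `J(τ) ω^{τu}` over a
full period of `τ`, orthogonality of the characters `τ ↦ ω^{τk}` kills every term whose frequency
`k ∈ {u, u + v, u - v}` is not divisible by `N`; for `0 < u < N/2` and `0 ≤ v < N/2` only `k = u - v`
with `v = u` survives, contributing `N X(u)`.
-/

open Real Complex Finset

theorem IsPrimitiveRoot.sum_zpow_mul_Ico {K : Type*} [Field K] {ω : K} {n : ℕ}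
    (hω : IsPrimitiveRoot ω n) (a k : ℤ) :
    ∑ τ ∈ Ico a (a + n), ω ^ (τ * k) = if (n : ℤ) ∣ k then (n : K) else 0 := by
  obtain rfl | hn := eq_or_ne n 0
  · simp
  set ζ := ω ^ k
  have hζ0 : ζ ≠ 0 := zpow_ne_zero _ (hω.ne_zero hn)
  have hshift : ∑ τ ∈ Ico a (a + n), ω ^ (τ * k) = ζ ^ a * ∑ j ∈ range n, ζ ^ j := by
    rw [Int.Ico_eq_finset_map, sum_map, mul_sum, add_sub_cancel_left, Int.toNat_natCast]
    refine sum_congr rfl fun j _ => ?_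
    simp only [Function.Embedding.trans_apply, Nat.castEmbedding_apply, addLeftEmbedding_apply]
    rw [← zpow_natCast, ← zpow_add₀ hζ0, ← zpow_mul, mul_comm]
  rw [hshift]
  split_ifs with hdvd
  · simp [ζ, (hω.zpow_eq_one_iff_dvd k).2 hdvd]
  · have hζ1 : ζ ≠ 1 := mt (hω.zpow_eq_one_iff_dvd k).1 hdvd
    have hζn : ζ ^ n = 1 := by
      rw [← zpow_natCast, ← zpow_mul, mul_comm, zpow_mul, zpow_natCast, hω.pow_eq_one, one_zpow]
    rw [geom_sum_eq hζ1, hζn, sub_self, zero_div, mul_zero]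

lemma Int.natCast_dvd_sub_iff_eq {n a b : ℕ} (ha : a < n) (hb : b < n) :
    (n : ℤ) ∣ (a : ℤ) - b ↔ a = b := by
  refine ⟨fun h => ?_, fun h => by simp [h]⟩
  have := Int.eq_zero_of_dvd_of_natAbs_lt_natAbs h (by omega)
  omega

theorem IsPrimitiveRoot.sum_Ico_two_mul_zpow_add_zpow_add_zpow {K : Type*} [Field K] {ω : K}
    {n : ℕ} (hω : IsPrimitiveRoot ω n) (a : ℤ) {u v : ℕ} (hu : 0 < u) (huv : u + v < n) :
    ∑ τ ∈ Ico a (a + n), (2 * ω ^ (τ * u) + ω ^ (τ * (u + v)) + ω ^ (τ * (u - v))) =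
      if v = u then (n : K) else 0 := by
  have hu_dvd : ¬ (n : ℤ) ∣ u := fun h => by
    have := Int.eq_zero_of_dvd_of_nonneg_of_lt (by omega) (by omega) h
    omega
  have huv_dvd : ¬ (n : ℤ) ∣ u + v := fun h => by
    have := Int.eq_zero_of_dvd_of_nonneg_of_lt (by omega) (by omega) h
    omega
  rw [sum_add_distrib, sum_add_distrib, ← mul_sum, hω.sum_zpow_mul_Ico, hω.sum_zpow_mul_Ico,
    hω.sum_zpow_mul_Ico]
  simp only [hu_dvd, huv_dvd, Int.natCast_dvd_sub_iff_eq (n := n) (a := u) (b := v) (by omega)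
    (by omega), eq_comm (a := u), if_false]
  ring

lemma two_mul_one_add_cos_mul_exp (a b : ℂ) :
    2 * (1 + cos b) * exp (I * a) = 2 * exp (I * a) + exp (I * (a + b)) + exp (I * (a - b)) := by
  rw [mul_add I, mul_sub I, Complex.exp_add, Complex.exp_sub, div_eq_mul_inv, ← Complex.exp_neg,
    mul_comm I b, ← neg_mul]
  linear_combination exp (I * a) * two_cos b

lemma two_mul_sum_one_add_cos_mul_exp (N m : ℕ) (X : ℕ → ℝ) (τ : ℤ) (u : ℕ) :
    ((2 * ∑ v ∈ range m, X v * (1 + Real.cos (2 * π * τ * v / N)) : ℝ) : ℂ) *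
        exp (I * ((2 * π * τ * u / N : ℝ) : ℂ)) =
      ∑ v ∈ range m, (X v : ℂ) * (2 * exp (2 * π * I / N) ^ (τ * u) +
        exp (2 * π * I / N) ^ (τ * (u + v)) + exp (2 * π * I / N) ^ (τ * (u - v))) := by
  have hzpow : ∀ k : ℤ, exp (2 * π * I / N) ^ (τ * k) = exp (I * (2 * π * τ * k / N)) :=
    fun k => by rw [← exp_int_mul]; push_cast; ring_nf
  push_cast
  rw [mul_sum, sum_mul]
  refine sum_congr rfl fun v _ => ?_
  rw [hzpow, hzpow, hzpow]
  push_cast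
  linear_combination (norm := ring_nf) (X v : ℂ) *
    two_mul_one_add_cos_mul_exp (2 * π * τ * u / N) (2 * π * τ * v / N)

lemma Int.Icc_neg_ediv_two_eq_Ico {N : ℕ} (hN : Even N) :
    Icc (-((N : ℤ) / 2)) ((N : ℤ) / 2 - 1) = Ico (-((N : ℤ) / 2)) (-((N : ℤ) / 2) + N) := by
  ext τ
  obtain ⟨M, rfl⟩ := hN
  simp only [mem_Icc, mem_Ico]
  omega

theorem stmt10_general (N : ℕ) (hNeven : Even N)
    (X : ℕ → ℝ) (J : ℤ → ℝ)
    (hJ : ∀ τ : ℤ, J τ = 2 * ∑ u ∈ Finset.range (N / 2), X u * (1 + Real.cos (2 * Real.pi * (τ : ℝ) * (u : ℝ) / (N : ℝ))))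
    (u : ℕ) (hu1 : 1 ≤ u) (hu2 : u ≤ N / 2 - 1) :
    X u = ((1 / (N : ℂ)) * ∑ τ ∈ Finset.Icc (-((N : ℤ) / 2)) ((N : ℤ) / 2 - 1),
      (J τ : ℂ) * Complex.exp (Complex.I * ((2 * Real.pi * (τ : ℝ) * (u : ℝ) / (N : ℝ) : ℝ) : ℂ))).re := by
  have hN : N ≠ 0 := by omega
  have hω := isPrimitiveRoot_exp N hN
  have hsum : ∑ τ ∈ Icc (-((N : ℤ) / 2)) ((N : ℤ) / 2 - 1),
      (J τ : ℂ) * exp (I * ((2 * π * τ * u / N : ℝ) : ℂ)) = X u * N := by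
    simp only [hJ, two_mul_sum_one_add_cos_mul_exp, Int.Icc_neg_ediv_two_eq_Ico hNeven]
    rw [sum_comm]
    calc _ = ∑ v ∈ range (N / 2), (X v : ℂ) * if v = u then (N : ℂ) else 0 := by
          refine sum_congr rfl fun v hv => ?_
          rw [mem_range] at hv
          rw [← mul_sum, hω.sum_Ico_two_mul_zpow_add_zpow_add_zpow _ (by omega) (by omega)]
      _ = X u * N := by
          simp only [mul_ite, mul_zero, sum_ite_eq', mem_range]
          exact if_pos (by omega)
  rw [hsum, one_div, mul_comm (X u : ℂ), inv_mul_cancel_left₀ (Nat.cast_ne_zero.2 hN), ofReal_re]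

theorem stmt10 (N : ℕ) (hNeven : Even N) (hN : 4 ≤ N)
    (X : ℕ → ℝ) (J : ℤ → ℝ)
    (hJ : ∀ τ : ℤ, J τ = 2 * ∑ u ∈ Finset.range (N / 2), X u * (1 + Real.cos (2 * Real.pi * (τ : ℝ) * (u : ℝ) / (N : ℝ))))
    (u : ℕ) (hu1 : 1 ≤ u) (hu2 : u ≤ N / 2 - 1) :
    X u = ((1 / (N : ℂ)) * ∑ τ ∈ Finset.Icc (-((N : ℤ) / 2)) ((N : ℤ) / 2 - 1),
      (J τ : ℂ) * Complex.exp (Complex.I * ((2 * Real.pi * (τ : ℝ) * (u : ℝ) / (N : ℝ) : ℝ) : ℂ))).re :=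
  stmt10_general N hNeven X J hJ u hu1 hu2
end

section
/- Let N be an even positive integer with N ≥ 4, let R be a real number, let A : ℕ → ℂ, and define J(τ) = ∑_{u=0}^{N/2−1} |A(u) + R·exp(i·2πτu/N)|² for integer τ. Then for every integer u with 1 ≤ u ≤ N/2 − 1, R·A(u) = (1/N) ∑_{τ=1}^{N} J(τ) exp(i·2πτu/N). -/
/-!
With `ζ = exp (2πi/N)`, each summand of the hologram is
`‖A v + R ζ^(τv)‖² = ‖A v‖² + R² + R (A v) ζ^(-τv) + R (conj (A v)) ζ^(τv)`,
so multiplying by `ζ^(τu)` and summing over a full period `τ = 1, …, N` only keeps the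
frequencies `u`, `u - v`, `u + v` that are divisible by `N`. For `0 < u, v < N/2` this leaves
just `u - v` with `v = u`, contributing `N R A u`.
-/

open Real Complex Finset ComplexConjugate

theorem sum_Icc_zpow_eq_zero {K : Type*} [Field K] {x : K} {N : ℕ} (hxN : x ^ N = 1)
    (hx1 : x ≠ 1) : ∑ τ ∈ Icc (1 : ℤ) N, x ^ τ = 0 := by
  rw [Int.Icc_eq_finset_map, sum_map]
  simp only [Function.Embedding.trans_apply, Nat.castEmbedding_apply, addLeftEmbedding_apply,
    add_sub_cancel_right, Int.toNat_natCast]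
  simp_rw [← Nat.cast_one (R := ℤ), ← Nat.cast_add, zpow_natCast, pow_add, pow_one, ← mul_sum,
    geom_sum_eq hx1, hxN, sub_self, zero_div, mul_zero]

theorem IsPrimitiveRoot.sum_Icc_zpow_mul_s13 {K : Type*} [Field K] {ζ : K} {N : ℕ}
    (hζ : IsPrimitiveRoot ζ N) (m : ℤ) :
    ∑ τ ∈ Icc (1 : ℤ) N, ζ ^ (τ * m) = if (N : ℤ) ∣ m then (N : K) else 0 := by
  simp_rw [mul_comm _ m, zpow_mul]
  split_ifs with hm
  · simp [(hζ.zpow_eq_one_iff_dvd m).mpr hm]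
  · refine sum_Icc_zpow_eq_zero ?_ (mt (hζ.zpow_eq_one_iff_dvd m).mp hm)
    rw [← zpow_natCast, ← zpow_mul, mul_comm, zpow_mul, zpow_natCast, hζ.pow_eq_one, one_zpow]

theorem IsPrimitiveRoot.sum_Icc_zpow_mul_of_abs_lt {K : Type*} [Field K] {ζ : K} {N : ℕ}
    (hζ : IsPrimitiveRoot ζ N) {m : ℤ} (hm : |m| < N) :
    ∑ τ ∈ Icc (1 : ℤ) N, ζ ^ (τ * m) = if m = 0 then (N : K) else 0 := by
  rw [hζ.sum_Icc_zpow_mul_s13]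
  exact if_congr ⟨fun h => Int.eq_zero_of_abs_lt_dvd h hm, by rintro rfl; exact dvd_zero _⟩
    rfl rfl

theorem Complex.ofReal_sq_norm_add_ofReal_mul {z : ℂ} (hz : ‖z‖ = 1) (a : ℂ) (r : ℝ) :
    ((‖a + r * z‖ ^ 2 : ℝ) : ℂ) = (‖a‖ ^ 2 + r ^ 2 : ℝ) + r * a * z⁻¹ + r * conj a * z := by
  have hz0 : z ≠ 0 := norm_ne_zero_iff.mp (by simp [hz])
  push_cast
  rw [← mul_conj', ← mul_conj', map_add, map_mul, conj_ofReal, ← inv_eq_conj hz]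
  field_simp
  ring

theorem Complex.sum_ofReal_sq_norm_add_mul_zpow {ζ : ℂ} (hζ : ‖ζ‖ = 1) (s : Finset ℤ) (a : ℂ)
    (r : ℝ) (u v : ℤ) :
    ∑ τ ∈ s, ((‖a + r * ζ ^ (τ * v)‖ ^ 2 : ℝ) : ℂ) * ζ ^ (τ * u) =
      (‖a‖ ^ 2 + r ^ 2 : ℝ) * ∑ τ ∈ s, ζ ^ (τ * u) + r * a * ∑ τ ∈ s, ζ ^ (τ * (u - v)) +
        r * conj a * ∑ τ ∈ s, ζ ^ (τ * (u + v)) := by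
  have hζ0 : ζ ≠ 0 := norm_ne_zero_iff.mp (by simp [hζ])
  simp_rw [mul_sum, ← sum_add_distrib, mul_sub, mul_add, zpow_sub₀ hζ0, zpow_add₀ hζ0,
    ofReal_sq_norm_add_ofReal_mul (by simp [hζ] : ‖ζ ^ (_ * v)‖ = 1)]
  refine sum_congr rfl fun τ _ => ?_
  ring

theorem IsPrimitiveRoot.sum_Icc_hologram_mul_zpow {ζ : ℂ} {N M : ℕ} (hζ : IsPrimitiveRoot ζ N)
    (hMN : 2 * M ≤ N) (R : ℝ) (A : ℕ → ℂ) {u : ℕ} (hu : 0 < u) (huM : u < M) :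
    ∑ τ ∈ Icc (1 : ℤ) N, ((∑ v ∈ range M, ‖A v + R * ζ ^ (τ * v)‖ ^ 2 : ℝ) : ℂ) * ζ ^ (τ * u) =
      N * (R * A u) := by
  have hN : N ≠ 0 := by omega
  have hcoeff : ∀ v ∈ range M, ∑ τ ∈ Icc (1 : ℤ) N,
      ((‖A v + R * ζ ^ (τ * v)‖ ^ 2 : ℝ) : ℂ) * ζ ^ (τ * u) =
        if v = u then N * (R * A u) else 0 := by
    intro v hv
    rw [mem_range] at hv
    rw [sum_ofReal_sq_norm_add_mul_zpow (hζ.norm'_eq_one hN),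
      hζ.sum_Icc_zpow_mul_of_abs_lt (by rw [abs_lt]; omega),
      hζ.sum_Icc_zpow_mul_of_abs_lt (by rw [abs_lt]; omega),
      hζ.sum_Icc_zpow_mul_of_abs_lt (by rw [abs_lt]; omega)]
    -- only the `u - v` frequency can vanish, and it does exactly when `v = u`
    split_ifs <;> first | omega | (subst_vars; ring)
  simp_rw [ofReal_sum, sum_mul]
  rw [sum_comm, sum_congr rfl hcoeff, sum_ite_eq' _ u, if_pos (mem_range.mpr huM)]

theorem Complex.exp_I_mul_two_pi_mul_div_eq_zpow (N : ℕ) (τ : ℤ) (v : ℕ) :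
    exp (I * ((2 * π * τ * v / N : ℝ) : ℂ)) = exp (2 * π * I / N) ^ (τ * v) := by
  rw [← exp_int_mul]
  push_cast
  field_simp

theorem stmt13_general (N : ℕ)
    (R : ℝ) (A : ℕ → ℂ) (J : ℤ → ℝ)
    (hJ : ∀ τ : ℤ, J τ = ∑ u ∈ Finset.range (N / 2), (‖A u + (R : ℂ) * Complex.exp (Complex.I * ((2 * Real.pi * (τ : ℝ) * (u : ℝ) / (N : ℝ) : ℝ) : ℂ))‖) ^ 2)
    (u : ℕ) (hu1 : 1 ≤ u) (hu2 : u ≤ N / 2 - 1) :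
    (R : ℂ) * A u = (1 / (N : ℂ)) * ∑ τ ∈ Finset.Icc (1 : ℤ) (N : ℤ),
      (J τ : ℂ) * Complex.exp (Complex.I * ((2 * Real.pi * (τ : ℝ) * (u : ℝ) / (N : ℝ) : ℝ) : ℂ)) := by
  have hN : N ≠ 0 := by omega
  simp only [hJ, exp_I_mul_two_pi_mul_div_eq_zpow N]
  rw [(isPrimitiveRoot_exp N hN).sum_Icc_hologram_mul_zpow (M := N / 2) (by omega) R A hu1
    (by omega)]
  field_simp

theorem stmt13 (N : ℕ) (hNeven : Even N) (hN : 4 ≤ N)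
    (R : ℝ) (A : ℕ → ℂ) (J : ℤ → ℝ)
    (hJ : ∀ τ : ℤ, J τ = ∑ u ∈ Finset.range (N / 2), (‖A u + (R : ℂ) * Complex.exp (Complex.I * ((2 * Real.pi * (τ : ℝ) * (u : ℝ) / (N : ℝ) : ℝ) : ℂ))‖) ^ 2)
    (u : ℕ) (hu1 : 1 ≤ u) (hu2 : u ≤ N / 2 - 1) :
    (R : ℂ) * A u = (1 / (N : ℂ)) * ∑ τ ∈ Finset.Icc (1 : ℤ) (N : ℤ),
      (J τ : ℂ) * Complex.exp (Complex.I * ((2 * Real.pi * (τ : ℝ) * (u : ℝ) / (N : ℝ) : ℝ) : ℂ)) :=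
  stmt13_general N R A J hJ u hu1 hu2
end

section
/- Let N be an even positive integer with N ≥ 4, let R be a real number, let A : ℕ → ℂ, and define J(τ) = ∑_{u=0}^{N/2−1} |A(u) + R·exp(i·2πτu/N)|² for integer τ. Then for every integer u with 1 ≤ u ≤ N/2 − 1, R·A(u) = (1/N) ∑_{τ=0}^{N−1} J(τ) exp(i·2πτu/N). -/
/-!
With ζ = exp(2πi/N) and |ζ^{τv}| = 1, each intensity expands as
|A v + R ζ^{τv}|² = |A v|² + R² + R A(v) ζ^{-τv} + R conj(A v) ζ^{τv}.
Multiplying by ζ^{τu} and summing over a full period τ = 0, …, N-1 leaves only the terms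
whose exponent is divisible by N, since ∑_τ ζ^{τk} = 0 otherwise. For 1 ≤ u < N/2 and
0 ≤ v < N/2 the exponents u and v + u lie strictly between 0 and N, and u - v is divisible by N
only when v = u; the surviving term is N R A(u).
-/

open Real Complex Finset ComplexConjugate

namespace IsPrimitiveRoot

variable {K : Type*} [Field K] {ζ : K} {N : ℕ}

theorem sum_range_zpow_mul_eq_zero (hζ : IsPrimitiveRoot ζ N) {k : ℤ} (hk : ¬(N : ℤ) ∣ k) :
    ∑ t ∈ range N, ζ ^ ((t : ℤ) * k) = 0 := by
  have hζk : ζ ^ k ≠ 1 := mt (hζ.zpow_eq_one_iff_dvd k).1 hk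
  have hζkN : (ζ ^ k) ^ N = 1 := by
    rw [← zpow_natCast, ← zpow_mul, mul_comm, zpow_mul, zpow_natCast, hζ.pow_eq_one, one_zpow]
  simp_rw [mul_comm (_ : ℤ) k, zpow_mul, zpow_natCast]
  rw [geom_sum_eq hζk, hζkN, sub_self, zero_div]

theorem sum_range_zpow_mul_sub {u v : ℕ} (hζ : IsPrimitiveRoot ζ N) (hu : u < N) (hv : v < N) :
    ∑ t ∈ range N, ζ ^ ((t : ℤ) * (u - v)) = if u = v then (N : K) else 0 := by
  split_ifs with huv
  · simp [huv]
  · refine hζ.sum_range_zpow_mul_eq_zero fun hdvd => huv ?_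
    have := Int.eq_zero_of_abs_lt_dvd hdvd (by rw [abs_lt]; omega)
    omega

end IsPrimitiveRoot

theorem ofReal_norm_add_mul_sq {z : ℂ} (hz : ‖z‖ = 1) (a : ℂ) (R : ℝ) :
    ((‖a + R * z‖ ^ 2 : ℝ) : ℂ) = ((‖a‖ ^ 2 + R ^ 2 : ℝ) : ℂ) + R * a * z⁻¹ + R * conj a * z := by
  have hzz : z * conj z = 1 := by rw [mul_conj', hz]; simp
  push_cast
  rw [← mul_conj', ← mul_conj', inv_eq_conj hz, map_add, map_mul, conj_ofReal]
  linear_combination (R : ℂ) ^ 2 * hzz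

noncomputable def hologram (ζ : ℂ) (M : ℕ) (R : ℝ) (A : ℕ → ℂ) (t : ℤ) : ℝ :=
  ∑ v ∈ range M, ‖A v + R * ζ ^ (t * v)‖ ^ 2

theorem IsPrimitiveRoot.sum_hologram_mul_zpow {ζ : ℂ} {N M u : ℕ} (hζ : IsPrimitiveRoot ζ N)
    (R : ℝ) (A : ℕ → ℂ) (hMN : 2 * M ≤ N) (hu0 : 0 < u) (huM : u < M) :
    ∑ t ∈ range N, (hologram ζ M R A t : ℂ) * ζ ^ ((t : ℤ) * u) = N * (R * A u) := by
  have hζ0 : ζ ≠ 0 := hζ.ne_zero (by omega)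
  have hζ1 (k : ℤ) : ‖ζ ^ k‖ = 1 := by rw [norm_zpow, hζ.norm'_eq_one (by omega), one_zpow]
  have hu : ¬(N : ℤ) ∣ u := by
    rw [Int.natCast_dvd_natCast]; exact Nat.not_dvd_of_pos_of_lt hu0 (by omega)
  have hvu (v : ℕ) (hv : v < M) : ¬(N : ℤ) ∣ (v + u : ℕ) := by
    rw [Int.natCast_dvd_natCast]; exact Nat.not_dvd_of_pos_of_lt (by omega) (by omega)
  calc ∑ t ∈ range N, (hologram ζ M R A t : ℂ) * ζ ^ ((t : ℤ) * u)
      = ∑ v ∈ range M, (((‖A v‖ ^ 2 + R ^ 2 : ℝ) : ℂ) * ∑ t ∈ range N, ζ ^ ((t : ℤ) * u)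
          + R * A v * ∑ t ∈ range N, ζ ^ ((t : ℤ) * (u - v))
          + R * conj (A v) * ∑ t ∈ range N, ζ ^ ((t : ℤ) * (v + u : ℕ))) := by
        simp_rw [hologram, ofReal_sum, sum_mul, ofReal_norm_add_mul_sq (hζ1 _), mul_sum]
        rw [sum_comm]
        refine sum_congr rfl fun v _ => ?_
        simp_rw [← sum_add_distrib]
        refine sum_congr rfl fun t _ => ?_
        rw [← zpow_neg, show (t : ℤ) * (u - v) = -(t * v) + t * u by ring,
          show (t : ℤ) * (v + u : ℕ) = t * v + t * u by push_cast; ring, zpow_add₀ hζ0,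
          zpow_add₀ hζ0]
        ring
    _ = ∑ v ∈ range M, if u = v then (N : ℂ) * (R * A u) else 0 := by
        refine sum_congr rfl fun v hv => ?_
        rw [mem_range] at hv
        rw [hζ.sum_range_zpow_mul_eq_zero hu, hζ.sum_range_zpow_mul_eq_zero (hvu v hv),
          hζ.sum_range_zpow_mul_sub (by omega) (by omega)]
        split_ifs with h
        · subst h; ring
        · simp
    _ = N * (R * A u) := by rw [sum_ite_eq, if_pos (mem_range.mpr huM)]

theorem exp_I_mul_two_pi_div_eq_zpow (N : ℕ) (τ : ℤ) (w : ℕ) :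
    Complex.exp (I * ((2 * π * (τ : ℝ) * (w : ℝ) / N : ℝ) : ℂ)) =
      Complex.exp (2 * π * I / N) ^ (τ * w) := by
  rw [← Complex.exp_int_mul]
  push_cast
  ring_nf

theorem stmt16_general (N : ℕ)
    (R : ℝ) (A : ℕ → ℂ) (J : ℤ → ℝ)
    (hJ : ∀ τ : ℤ, J τ = ∑ u ∈ Finset.range (N / 2), (Norm.norm (A u + (R : ℂ) * Complex.exp (Complex.I * ((2 * Real.pi * (τ : ℝ) * (u : ℝ) / (N : ℝ) : ℝ) : ℂ)))) ^ 2)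
    (u : ℕ) (hu1 : 1 ≤ u) (hu2 : u ≤ N / 2 - 1) :
    (R : ℂ) * A u = (1 / (N : ℂ)) * ∑ τ ∈ Finset.Icc (0 : ℤ) ((N : ℤ) - 1),
      (J τ : ℂ) * Complex.exp (Complex.I * ((2 * Real.pi * (τ : ℝ) * (u : ℝ) / (N : ℝ) : ℝ) : ℂ)) := by
  have hN0 : N ≠ 0 := by omega
  have hζ := isPrimitiveRoot_exp N hN0
  have hJ_eq (τ : ℤ) : J τ = hologram (Complex.exp (2 * π * I / N)) (N / 2) R A τ := by
    simp only [hJ, hologram, exp_I_mul_two_pi_div_eq_zpow]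
  rw [Int.Icc_eq_finset_map, sub_add_cancel, sub_zero, Int.toNat_natCast, sum_map]
  simp only [Function.Embedding.trans_apply, Nat.castEmbedding_apply, addLeftEmbedding_apply,
    zero_add, hJ_eq, exp_I_mul_two_pi_div_eq_zpow]
  rw [hζ.sum_hologram_mul_zpow R A (Nat.mul_div_le N 2) hu1 (by omega)]
  field_simp

theorem stmt16 (N : ℕ) (hNeven : Even N) (hN : 4 ≤ N)
    (R : ℝ) (A : ℕ → ℂ) (J : ℤ → ℝ)
    (hJ : ∀ τ : ℤ, J τ = ∑ u ∈ Finset.range (N / 2), (Norm.norm (A u + (R : ℂ) * Complex.exp (Complex.I * ((2 * Real.pi * (τ : ℝ) * (u : ℝ) / (N : ℝ) : ℝ) : ℂ)))) ^ 2)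
    (u : ℕ) (hu1 : 1 ≤ u) (hu2 : u ≤ N / 2 - 1) :
    (R : ℂ) * A u = (1 / (N : ℂ)) * ∑ τ ∈ Finset.Icc (0 : ℤ) ((N : ℤ) - 1),
      (J τ : ℂ) * Complex.exp (Complex.I * ((2 * Real.pi * (τ : ℝ) * (u : ℝ) / (N : ℝ) : ℝ) : ℂ)) :=
  stmt16_general N R A J hJ u hu1 hu2
end

section
/- Let N be an even positive integer with N ≥ 4, let R be a real number, let A : ℕ → ℂ, and define J(τ) = ∑_{u=0}^{N/2−1} |A(u) + R·exp(i·2πτu/N)|² for integer τ. Then |A(0) + R|² = (1/N) ∑_{τ=0}^{N−1} J(τ) − ∑_{u₁=1}^{N/2−1} |A(u₁)|² − (N/2 − 1)·R². -/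
/-!
Averaging the hologram over the `N` sampling positions `τ` diagonalises it: expanding
`‖A u + R e^{2πiτu/N}‖²`, the cross term is a multiple of the sum of the `N`-th roots of unity
`e^{2πiτu/N}`, which vanishes for `0 < u < N`. So `∑_τ J τ = N ‖A 0 + R‖² + N ∑_{0<u<N/2} (‖A u‖² + R²)`,
and the zero-frequency term is what is left after subtracting the others.
-/

open Real Complex Finset

theorem IsPrimitiveRoot.geom_sum_pow_eq_zero {R : Type*} [CommRing R] [IsDomain R] {ζ : R}
    {N : ℕ} (hζ : IsPrimitiveRoot ζ N) {u : ℕ} (hu : ¬ N ∣ u) :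
    ∑ k ∈ range N, (ζ ^ u) ^ k = 0 := by
  refine eq_zero_of_ne_zero_of_mul_right_eq_zero
    (sub_ne_zero_of_ne (mt (hζ.pow_eq_one_iff_dvd u).mp hu)) ?_
  rw [geom_sum_mul, pow_right_comm, hζ.pow_eq_one, one_pow, sub_self]

theorem sum_norm_add_sq_of_sum_eq_zero {E ι : Type*} [NormedAddCommGroup E]
    [InnerProductSpace ℝ E] (s : Finset ι) (a : E) (w : ι → E) (hw : ∑ k ∈ s, w k = 0) :
    ∑ k ∈ s, ‖a + w k‖ ^ 2 = #s * ‖a‖ ^ 2 + ∑ k ∈ s, ‖w k‖ ^ 2 := by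
  have hcross : ∑ k ∈ s, 2 * inner ℝ a (w k) = 0 := by
    rw [← mul_sum, ← inner_sum, hw, inner_zero_right, mul_zero]
  simp only [norm_add_sq_real, sum_add_distrib, hcross, add_zero, sum_const, nsmul_eq_mul]

theorem exp_I_mul_two_pi_mul_div_eq_pow (N k u : ℕ) :
    exp (I * ((2 * π * k * u / N : ℝ) : ℂ)) = (exp (2 * π * I / N) ^ u) ^ k := by
  rw [← Complex.exp_nat_mul, ← Complex.exp_nat_mul]
  push_cast
  ring_nf

theorem sum_exp_I_mul_two_pi_mul_div_eq_zero {N u : ℕ} (hu : ¬ N ∣ u) :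
    ∑ k ∈ range N, exp (I * ((2 * π * k * u / N : ℝ) : ℂ)) = 0 := by
  obtain rfl | hN := eq_or_ne N 0
  · simp
  simp only [exp_I_mul_two_pi_mul_div_eq_pow]
  exact (isPrimitiveRoot_exp N hN).geom_sum_pow_eq_zero hu

theorem sum_norm_add_mul_exp_sq_of_not_dvd {N u : ℕ} (hu : ¬ N ∣ u) (a : ℂ) (R : ℝ) :
    ∑ k ∈ range N, ‖a + R * exp (I * ((2 * π * k * u / N : ℝ) : ℂ))‖ ^ 2
      = N * (‖a‖ ^ 2 + R ^ 2) := by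
  rw [sum_norm_add_sq_of_sum_eq_zero _ a _
    (by rw [← mul_sum, sum_exp_I_mul_two_pi_mul_div_eq_zero hu, mul_zero])]
  simp only [norm_mul, norm_exp_I_mul_ofReal, norm_real, Real.norm_eq_abs, mul_one, sq_abs,
    sum_const, card_range, nsmul_eq_mul]
  ring

theorem sum_sum_norm_add_mul_exp_sq {N n : ℕ} (hn0 : 0 < n) (hnN : n ≤ N) (A : ℕ → ℂ) (R : ℝ) :
    ∑ k ∈ range N, ∑ u ∈ range n, ‖A u + R * exp (I * ((2 * π * k * u / N : ℝ) : ℂ))‖ ^ 2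
      = N * ‖A 0 + R‖ ^ 2 + N * ∑ u ∈ Icc 1 (n - 1), (‖A u‖ ^ 2 + R ^ 2) := by
  rw [sum_comm, range_eq_Ico, sum_eq_sum_Ico_succ_bot hn0, zero_add, mul_sum,
    ← Ico_add_one_right_eq_Icc, Nat.sub_add_cancel (Nat.one_le_iff_ne_zero.mpr hn0.ne')]
  congr 1
  · simp
  · refine sum_congr rfl fun u hu => ?_
    rw [mem_Ico] at hu
    exact sum_norm_add_mul_exp_sq_of_not_dvd (Nat.not_dvd_of_pos_of_lt hu.1 (by omega)) _ _

theorem stmt17 (N : ℕ) (hNeven : Even N) (hN : 4 ≤ N)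
    (R : ℝ) (A : ℕ → ℂ) (J : ℤ → ℝ)
    (hJ : ∀ τ : ℤ, J τ = ∑ u ∈ Finset.range (N / 2), (Norm.norm (A u + (R : ℂ) * Complex.exp (Complex.I * ((2 * Real.pi * (τ : ℝ) * (u : ℝ) / (N : ℝ) : ℝ) : ℂ)))) ^ 2) :
    (Norm.norm (A 0 + (R : ℂ))) ^ 2 = (1 / (N : ℝ)) * ∑ τ ∈ Finset.Icc (0 : ℤ) ((N : ℤ) - 1), J τ - ∑ u₁ ∈ Finset.Icc 1 (N / 2 - 1), (Norm.norm (A u₁)) ^ 2 - ((N : ℝ) / 2 - 1) * R ^ 2 := by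
  obtain ⟨n, rfl⟩ := hNeven
  have hn : (n + n) / 2 = n := by omega
  have hsum : ∑ τ ∈ Icc (0 : ℤ) ((n + n : ℕ) - 1), J τ
      = (n + n : ℕ) * ‖A 0 + R‖ ^ 2 + (n + n : ℕ) * ∑ u ∈ Icc 1 (n - 1), (‖A u‖ ^ 2 + R ^ 2) := by
    rw [Int.Icc_eq_finset_map, sum_map, ← sum_sum_norm_add_mul_exp_sq (by omega) (by omega)]
    refine sum_congr (by congr 1; omega) fun k _ => ?_
    simp [hJ, hn]
  rw [hsum, hn, sum_add_distrib, sum_const, Nat.card_Icc, Nat.add_sub_cancel, Nat.cast_add,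
    nsmul_eq_mul, Nat.cast_sub (by omega : 1 ≤ n)]
  have hn_ne : (n : ℝ) ≠ 0 := by exact_mod_cast (by omega : n ≠ 0)
  field_simp
  ring
end

section
/- Let N be an even positive integer with N ≥ 4, let R be a real number, let A : ℕ → ℂ, and define J(τ) = ∑_{u=0}^{N/2−1} |A(u) + R·exp(i·2πτu/N)|² for integer τ (including negative τ). Then |A(0) + R|² = (1/N) ∑_{τ=−N/2}^{N/2−1} J(τ) − ∑_{u₁=1}^{N/2−1} |A(u₁)|² − (N/2 − 1)·R². -/
/-!
Summing `J` over a full period of `N` shifts and exchanging the sums, each frequency `u` with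
`0 < u < N` contributes `N (‖A u‖² + R²)`: the cross term `2 R Re (A u · conj e_τ(u))` sums to zero
because the `N`-th roots of unity `e_τ(u) = exp(2πiτu/N)` over a period sum to zero. The frequency
`u = 0` has `e_τ(0) = 1` and contributes `N ‖A 0 + R‖²`.
-/

open Real Complex Finset

theorem sum_zpow_Ico_eq_zero {K : Type*} [Field K] {ζ : K} {N : ℕ} (hζN : ζ ^ N = 1)
    (hζ1 : ζ ≠ 1) (a : ℤ) : ∑ τ ∈ Ico a (a + N), ζ ^ τ = 0 := by
  rcases N.eq_zero_or_pos with rfl | hN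
  · simp
  have hζ0 : ζ ≠ 0 := by rintro rfl; simp [hN.ne'] at hζN
  rw [Int.Ico_eq_finset_map, sum_map, add_sub_cancel_left, Int.toNat_natCast]
  simp only [Function.Embedding.trans_apply, Nat.castEmbedding_apply, addLeftEmbedding_apply,
    zpow_add₀ hζ0, zpow_natCast, ← mul_sum, geom_sum_eq hζ1, hζN, sub_self, zero_div, mul_zero]

theorem sum_exp_Ico_eq_zero {N u : ℕ} (hu : ¬ N ∣ u) (a : ℤ) :
    ∑ τ ∈ Ico a (a + N), exp (I * ((2 * π * (τ : ℝ) * (u : ℝ) / (N : ℝ) : ℝ) : ℂ)) = 0 := by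
  rcases eq_or_ne N 0 with rfl | hN
  · simp
  have hω := isPrimitiveRoot_exp N hN
  have hexp : ∀ τ : ℤ, exp (I * ((2 * π * (τ : ℝ) * (u : ℝ) / (N : ℝ) : ℝ) : ℂ))
      = (exp (2 * π * I / N) ^ u) ^ τ := by
    intro τ
    rw [← zpow_natCast, ← zpow_mul, ← exp_int_mul]
    congr 1
    push_cast
    ring
  simp only [hexp]
  refine sum_zpow_Ico_eq_zero ?_ (mt (hω.pow_eq_one_iff_dvd u).mp hu) a
  rw [pow_right_comm, hω.pow_eq_one, one_pow]

theorem sum_norm_add_smul_sq {E ι : Type*} [NormedAddCommGroup E] [InnerProductSpace ℝ E]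
    (s : Finset ι) (x : E) (r : ℝ) {z : ι → E} (hz : ∀ i ∈ s, ‖z i‖ = 1)
    (hsum : ∑ i ∈ s, z i = 0) :
    ∑ i ∈ s, ‖x + r • z i‖ ^ 2 = #s * (‖x‖ ^ 2 + r ^ 2) := by
  have hcross : ∑ i ∈ s, inner ℝ x (r • z i) = 0 := by
    rw [← inner_sum, ← smul_sum, hsum, smul_zero, inner_zero_right]
  calc ∑ i ∈ s, ‖x + r • z i‖ ^ 2
      = ∑ i ∈ s, (‖x‖ ^ 2 + r ^ 2 + 2 * inner ℝ x (r • z i)) := by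
        refine sum_congr rfl fun i hi => ?_
        rw [norm_add_sq_real, norm_smul, hz i hi, mul_one, Real.norm_eq_abs, sq_abs]
        ring
    _ = #s * (‖x‖ ^ 2 + r ^ 2) := by
        rw [sum_add_distrib, ← mul_sum, hcross, sum_const, nsmul_eq_mul]
        ring

theorem sum_norm_add_mul_exp_sq {N u : ℕ} (hu : ¬ N ∣ u) (a : ℤ) (x : ℂ) (r : ℝ) :
    ∑ τ ∈ Ico a (a + N), ‖x + r * exp (I * ((2 * π * (τ : ℝ) * (u : ℝ) / (N : ℝ) : ℝ) : ℂ))‖ ^ 2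
      = N * (‖x‖ ^ 2 + r ^ 2) := by
  simp only [← real_smul]
  rw [sum_norm_add_smul_sq _ x r (fun τ _ => norm_exp_I_mul_ofReal _) (sum_exp_Ico_eq_zero hu a),
    Int.card_Ico, add_sub_cancel_left, Int.toNat_natCast]

theorem stmt19 (N : ℕ) (hNeven : Even N) (hN : 4 ≤ N)
    (R : ℝ) (A : ℕ → ℂ) (J : ℤ → ℝ)
    (hJ : ∀ τ : ℤ, J τ = ∑ u ∈ Finset.range (N / 2), ‖A u + (R : ℂ) * Complex.exp (Complex.I * ((2 * Real.pi * (τ : ℝ) * (u : ℝ) / (N : ℝ) : ℝ) : ℂ))‖ ^ 2) :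
    ‖A 0 + (R : ℂ)‖ ^ 2 = (1 / (N : ℝ)) * ∑ τ ∈ Finset.Icc (-((N : ℤ) / 2)) ((N : ℤ) / 2 - 1), J τ - ∑ u₁ ∈ Finset.Icc 1 (N / 2 - 1), ‖A u₁‖ ^ 2 - ((N : ℝ) / 2 - 1) * R ^ 2 := by
  obtain ⟨m, rfl⟩ := hNeven
  have hm : (m + m) / 2 = m := by omega
  have hτ : Icc (-(((m + m : ℕ) : ℤ) / 2)) (((m + m : ℕ) : ℤ) / 2 - 1)
      = Ico (-(m : ℤ)) (-m + (m + m : ℕ)) := by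
    ext τ; simp only [mem_Icc, mem_Ico]; omega
  have hIcc : Icc 1 (m - 1) = Ico 1 m := by
    ext u; simp only [mem_Icc, mem_Ico]; omega
  have hsum : ∑ τ ∈ Ico (-(m : ℤ)) (-m + (m + m : ℕ)), J τ
      = (m + m : ℕ) * ‖A 0 + R‖ ^ 2 + ∑ u ∈ Ico 1 m, (m + m : ℕ) * (‖A u‖ ^ 2 + R ^ 2) := by
    simp only [hJ, hm]
    rw [sum_comm, range_eq_Ico, sum_eq_sum_Ico_succ_bot (by omega)]
    congr 1
    · simp only [Nat.cast_zero, mul_zero, zero_div, ofReal_zero, Complex.exp_zero, mul_one,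
        sum_const, Int.card_Ico, add_sub_cancel_left, Int.toNat_natCast, nsmul_eq_mul]
    · refine sum_congr rfl fun u hu => sum_norm_add_mul_exp_sq ?_ _ _ _
      rw [mem_Ico] at hu
      exact Nat.not_dvd_of_pos_of_lt (by omega) (by omega)
  rw [hτ, hsum, hm, hIcc]
  simp only [mul_add, sum_add_distrib, ← mul_sum, sum_const, Nat.card_Ico, nsmul_eq_mul,
    Nat.cast_pred (by omega : 0 < m)]
  have hm0 : (m : ℝ) ≠ 0 := Nat.cast_ne_zero.mpr (by omega)
  push_cast
  field_simp
  ring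
end
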